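/- arXiv:1712.03535 — 7 statements merged into one kernel-verified Lean document; each statement's English description precedes it below -/
import Mathlib

section
/- For every integer n ≥ 2, every perfect matching M of the n-dimensional hypercube graph Q_n, and every forcing set S of M (i.e., every subset S of the edge set of M such that M is the only perfect matching of Q_n whose edge set contains S), the set S has cardinality at least 2^(n-2). In particular, the forcing number of every perfect matching of Q_n is at least 2^(n-2). -/
/-
Over a field `K` of characteristic 2, weight the edges of `Q_n` in direction `i` by `α i ≠ 0`,
with `∑ i, α i = 0` (possible in `GaloisField 2 2` for `n ≥ 2`). The weighted adjacency matrix
is `A = ∑ i, α i • T i` for the commuting translation involutions `T i`, so by the Frobenius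
identity `A ^ 2 = (∑ i, α i) ^ 2 • 1 = 0`, whence `rank A ≤ 2 ^ (n - 1)`.

If `S` forces `M`, then the vertices `W` not covered by `S` carry exactly one perfect matching of
`Q_n[W]`. In characteristic 2 the determinant of a symmetric matrix is the sum of
`∏ i, B (σ i) i` over involutions `σ` only, and for the zero-diagonal matrix `A[W, W]` the nonzero
terms are exactly the perfect matchings of `Q_n[W]`. Hence `A[W, W]` is invertible, so
`2 ^ n - 2 * |S| ≤ |W| ≤ rank A ≤ 2 ^ (n - 1)`.
-/

/-- The `n`-dimensional hypercube graph: vertices are elements of `{0,1}^n`,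
adjacent iff they differ in exactly one coordinate. -/
def hypercube (n : ℕ) : SimpleGraph (Fin n → ZMod 2) where
  Adj x y := ∃! i, x i ≠ y i
  symm := by constructor; rintro x y ⟨i, hi, hu⟩; exact ⟨i, Ne.symm hi, fun j hj => hu j (Ne.symm hj)⟩
  loopless := by constructor; rintro x ⟨i, hi, -⟩; exact hi rfl

open Finset Function Equiv

theorem sum_pow_char_of_commute {ι R : Type*} [Semiring R] (p : ℕ) [Fact p.Prime]
    [CharP R p] (s : Finset ι) (x : ι → R) (hx : ∀ i j, Commute (x i) (x j)) :
    (∑ i ∈ s, x i) ^ p = ∑ i ∈ s, x i ^ p := by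
  classical
  induction s using Finset.induction_on with
  | empty => simp [zero_pow (Fact.out : p.Prime).ne_zero]
  | insert a s ha ih =>
    rw [sum_insert ha, sum_insert ha,
      add_pow_char_of_commute p (Commute.sum_right _ _ _ fun j _ => hx a j), ih]

namespace Matrix

variable {ι m R K : Type*} [Fintype ι] [DecidableEq ι]

theorem det_eq_sum_involutions_of_isSymm [CommRing R] [CharP R 2] {B : Matrix ι ι R}
    (hB : B.IsSymm) :
    B.det = ∑ σ ∈ univ.filter (fun σ : Perm ι => σ⁻¹ = σ), ∏ i, B (σ i) i := by
  have hsign : ∀ σ : Perm ι, Perm.sign σ • ∏ i, B (σ i) i = ∏ i, B (σ i) i := fun σ => by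
    rcases Int.units_eq_one_or (Perm.sign σ) with h | h <;>
      simp [h, Units.smul_def, CharTwo.neg_eq]
  -- Since `B` is symmetric, `σ` and `σ⁻¹` contribute the same term, and these cancel in pairs.
  have hinv : ∀ σ : Perm ι, ∏ i, B (σ⁻¹ i) i = ∏ i, B (σ i) i := fun σ => by
    rw [← Equiv.prod_comp σ]
    exact prod_congr rfl fun i _ => by simpa using hB.apply (σ i) i
  rw [det_apply, ← sum_filter_add_sum_filter_not univ (fun σ : Perm ι => σ⁻¹ = σ)]
  simp only [hsign, add_eq_left]
  refine sum_involution (fun σ _ => σ⁻¹) (fun σ _ => by rw [hinv, CharTwo.add_self_eq_zero])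
    (fun σ hσ _ => (mem_filter.1 hσ).2) (fun σ hσ => ?_) (fun σ _ => inv_inv σ)
  simp only [mem_filter, mem_univ, true_and, inv_inv] at hσ ⊢
  exact Ne.symm hσ

theorem det_ne_zero_of_unique_involution [Field K] [CharP K 2] {B : Matrix ι ι K}
    (hB : B.IsSymm) {σ₀ : Perm ι} (hσ₀ : Involutive σ₀) (hprod : ∏ i, B (σ₀ i) i ≠ 0)
    (huniq : ∀ σ : Perm ι, Involutive σ → ∏ i, B (σ i) i ≠ 0 → σ = σ₀) : B.det ≠ 0 := by
  have hσ₀inv : σ₀⁻¹ = σ₀ := hσ₀.symm_eq_self_of_involutive σ₀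
  rwa [det_eq_sum_involutions_of_isSymm hB, sum_eq_single_of_mem σ₀ (by simpa using hσ₀inv)]
  intro σ hσ hne
  by_contra h
  refine hne (huniq σ (fun x => ?_) h)
  have := σ.symm_apply_apply x
  rwa [← Perm.inv_def, (mem_filter.1 hσ).2] at this

theorem card_le_rank_of_det_submatrix_ne_zero [Field K] [Fintype m] {A : Matrix m m K}
    (f : ι → m) (h : (A.submatrix f f).det ≠ 0) : Fintype.card ι ≤ A.rank :=
  (rank_of_isUnit _ ((isUnit_iff_isUnit_det _).2 (isUnit_iff_ne_zero.2 h))).symm.le.trans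
    (rank_submatrix_le A f f)

omit [DecidableEq ι] in
theorem two_mul_rank_le_card_of_mul_self_eq_zero [Field K] {A : Matrix ι ι K} (hA : A * A = 0) :
    2 * A.rank ≤ Fintype.card ι := by
  simpa [two_mul] using rank_add_rank_le_card_of_mul_eq_zero hA

end Matrix

namespace SimpleGraph

variable {V : Type*} {G : SimpleGraph V}

def coveredVerts (S : Set (Sym2 V)) : Set V := {v | ∃ e ∈ S, v ∈ e}

theorem ncard_coveredVerts_le {S : Set (Sym2 V)} (hS : S.Finite) :
    (coveredVerts S).ncard ≤ 2 * S.ncard := by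
  classical
  have hC : coveredVerts S = ↑(hS.toFinset.biUnion Sym2.toFinset) := by
    ext v; simp [coveredVerts]
  rw [hC, Set.ncard_coe_finset, Set.ncard_eq_toFinset_card S hS, mul_comm]
  refine card_biUnion_le.trans (sum_le_card_nsmul _ _ 2 fun e _ => ?_)
  rw [Sym2.card_toFinset]
  split_ifs <;> omega

namespace Subgraph

def ofInvolutive (σ : V → V) (hσ : Involutive σ) (hadj : ∀ v, G.Adj v (σ v)) : G.Subgraph where
  verts := Set.univ
  Adj v w := w = σ v
  adj_sub := by rintro v _ rfl; exact hadj v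
  edge_vert _ := Set.mem_univ _
  symm := ⟨by rintro v _ rfl; exact (hσ v).symm⟩

theorem isPerfectMatching_ofInvolutive {σ : V → V} (hσ : Involutive σ)
    (hadj : ∀ v, G.Adj v (σ v)) : (ofInvolutive σ hσ hadj).IsPerfectMatching :=
  isPerfectMatching_iff.2 fun v => ⟨σ v, rfl, fun _ h => h⟩

variable {M : G.Subgraph}

theorem IsPerfectMatching.exists_involutive (hM : M.IsPerfectMatching) :
    ∃ m : V → V, Involutive m ∧ ∀ v, M.Adj v (m v) := by
  choose m hm using fun v => (isPerfectMatching_iff.1 hM v).exists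
  exact ⟨m, fun v => hM.1.eq_of_adj_left (hm (m v)) (hm v).symm, hm⟩

def IsForcingSet (M : G.Subgraph) (S : Set (Sym2 V)) : Prop :=
  S ⊆ M.edgeSet ∧ ∀ M' : G.Subgraph, M'.IsPerfectMatching → S ⊆ M'.edgeSet → M' = M

variable {S : Set (Sym2 V)}

theorem IsMatching.mem_coveredVerts_of_adj (hM : M.IsMatching) (hS : S ⊆ M.edgeSet) {v w : V}
    (hvw : M.Adj v w) (hv : v ∈ coveredVerts S) : w ∈ coveredVerts S := by
  obtain ⟨e, he, hve⟩ := hv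
  obtain ⟨u, rfl⟩ := Sym2.mem_iff_exists.1 hve
  obtain rfl := hM.eq_of_adj_left (hS he) hvw
  exact ⟨_, he, Sym2.mem_mk_right v u⟩

theorem IsForcingSet.adj_of_involutive (hM : M.IsMatching) (hS : M.IsForcingSet S) {τ : V → V}
    (hτ : Involutive τ) (hadj : ∀ v, G.Adj v (τ v))
    (hagree : ∀ v ∈ coveredVerts S, M.Adj v (τ v)) (v : V) : M.Adj v (τ v) := by
  suffices ofInvolutive τ hτ hadj = M by rw [← this]; rfl
  refine hS.2 _ (isPerfectMatching_ofInvolutive hτ hadj) fun e he => ?_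
  induction e using Sym2.ind with
  | h a b => exact hM.eq_of_adj_left (hS.1 he) (hagree a ⟨_, he, Sym2.mem_mk_left a b⟩)

/-- With perfect matchings encoded as involutions: on the vertices not covered by a forcing set,
`M` is the only perfect matching. -/
theorem IsForcingSet.adj_of_involutive_compl (hM : M.IsPerfectMatching) (hS : M.IsForcingSet S)
    {σ : ↥(coveredVerts S)ᶜ → ↥(coveredVerts S)ᶜ} (hσ : Involutive σ)
    (hadj : ∀ v : ↥(coveredVerts S)ᶜ, G.Adj v (σ v)) (v : ↥(coveredVerts S)ᶜ) : M.Adj v (σ v) := by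
  classical
  obtain ⟨m, hm, hMm⟩ := hM.exists_involutive
  have hmC : ∀ {v}, v ∈ coveredVerts S → m v ∈ coveredVerts S :=
    hM.1.mem_coveredVerts_of_adj hS.1 (hMm _)
  let τ : V → V := fun v => if h : v ∈ coveredVerts S then m v else σ ⟨v, h⟩
  have hτC : ∀ {v}, v ∈ coveredVerts S → τ v = m v := fun h => dif_pos h
  have hτW : ∀ v : ↥(coveredVerts S)ᶜ, τ v = σ v := fun v => dif_neg v.2
  have hτ : Involutive τ := fun v => by
    by_cases h : v ∈ coveredVerts S
    · rw [hτC h, hτC (hmC h), hm]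
    · rw [show τ v = σ ⟨v, h⟩ from hτW ⟨v, h⟩, hτW, hσ]
  have := hS.adj_of_involutive hM.1 hτ (fun v => ?_) (fun v hv => hτC hv ▸ hMm v) v
  · rwa [hτW] at this
  · by_cases h : v ∈ coveredVerts S
    · exact hτC h ▸ M.adj_sub (hMm v)
    · exact hτW ⟨v, h⟩ ▸ hadj ⟨v, h⟩

variable [Fintype V] [DecidableEq V] {K : Type*} [Field K] [CharP K 2] {A : Matrix V V K}

theorem IsForcingSet.ncard_compl_coveredVerts_le_rank (hA : A.IsSymm)
    (hAG : ∀ u v, A u v ≠ 0 ↔ G.Adj u v) (hM : M.IsPerfectMatching) (hS : M.IsForcingSet S) :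
    (coveredVerts S)ᶜ.ncard ≤ A.rank := by
  classical
  obtain ⟨m, hm, hMm⟩ := hM.exists_involutive
  have hW : ∀ v, m v ∈ (coveredVerts S)ᶜ ↔ v ∈ (coveredVerts S)ᶜ := fun v =>
    not_congr ⟨fun h => hm v ▸ hM.1.mem_coveredVerts_of_adj hS.1 (hMm _) h,
      hM.1.mem_coveredVerts_of_adj hS.1 (hMm v)⟩
  let σ₀ := (hm.toPerm m).subtypePerm hW
  have hσ₀ : ∀ v : ↥(coveredVerts S)ᶜ, M.Adj v (σ₀ v) := fun v => hMm v
  rw [Set.ncard_eq_toFinset_card', Set.toFinset_card]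
  refine Matrix.card_le_rank_of_det_submatrix_ne_zero Subtype.val
    (Matrix.det_ne_zero_of_unique_involution (hA.submatrix _) (σ₀ := σ₀) ?_ ?_ ?_)
  · exact fun v => Subtype.ext (hm v)
  · exact prod_ne_zero_iff.2 fun v _ => (hAG _ _).2 (M.adj_sub (hσ₀ v)).symm
  · intro σ hσ hprod
    have hadj : ∀ v : ↥(coveredVerts S)ᶜ, G.Adj v (σ v) := fun v =>
      ((hAG _ _).1 (prod_ne_zero_iff.1 hprod v (mem_univ v))).symm
    exact Perm.ext fun v => Subtype.ext <|
      hM.1.eq_of_adj_left (hS.adj_of_involutive_compl hM hσ hadj v) (hσ₀ v)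

theorem IsForcingSet.card_le_two_mul_ncard_add_rank (hA : A.IsSymm)
    (hAG : ∀ u v, A u v ≠ 0 ↔ G.Adj u v) (hM : M.IsPerfectMatching) (hS : M.IsForcingSet S) :
    Fintype.card V ≤ 2 * S.ncard + A.rank := by
  have hC := ncard_coveredVerts_le S.toFinite
  have hW := hS.ncard_compl_coveredVerts_le_rank hA hAG hM
  have := Set.ncard_add_ncard_compl (coveredVerts S)
  rw [Nat.card_eq_fintype_card] at this
  omega

end Subgraph
end SimpleGraph

theorem exists_ne_zero_sum_eq_zero {K : Type*} [Field K] [Finite K] (hK : 2 < Nat.card K)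
    {n : ℕ} (hn : 2 ≤ n) : ∃ α : Fin n → K, (∀ i, α i ≠ 0) ∧ ∑ i, α i = 0 := by
  obtain ⟨k, rfl⟩ : ∃ k, n = k + 2 := ⟨n - 2, by omega⟩
  obtain ⟨a, -, ha⟩ := Set.exists_mem_notMem_of_ncard_lt_ncard (s := {0, -(k : K)})
    (t := Set.univ)
    ((Set.ncard_insert_le _ _).trans_lt (by rwa [Set.ncard_singleton, Set.ncard_univ]))
  simp only [Set.mem_insert_iff, Set.mem_singleton_iff, not_or] at ha
  refine ⟨Fin.cons a (Fin.cons (-k - a) fun _ => 1), fun i => ?_, ?_⟩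
  · refine Fin.cases ha.1 (Fin.cases ?_ fun _ => one_ne_zero) i
    simpa [sub_eq_zero, eq_comm] using ha.2
  · simp only [Fin.sum_univ_succ, Fin.cons_zero, Fin.cons_succ, sum_const, card_univ,
      Fintype.card_fin, nsmul_eq_mul, mul_one]
    ring

variable {n : ℕ}

theorem hypercube_adj_iff {u v : Fin n → ZMod 2} :
    (hypercube n).Adj u v ↔ ∃ i, u + Pi.single i 1 = v := by
  have h2 : ∀ a b : ZMod 2, a ≠ b ↔ a + 1 = b := by decide
  constructor
  · rintro ⟨i, hi, huniq⟩
    refine ⟨i, funext fun j => ?_⟩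
    rcases eq_or_ne j i with rfl | hj
    · simpa using (h2 _ _).1 hi
    · simpa [hj] using not_imp_comm.1 (huniq j) hj
  · rintro ⟨i, rfl⟩
    refine ⟨i, by simp [h2], fun j hj => ?_⟩
    by_contra hji
    simp [hji] at hj

theorem Equiv.addRight_mul_self_of_zmodTwo {A : Type*} [AddCommGroup A] [Module (ZMod 2) A]
    (x : A) : Equiv.addRight x * Equiv.addRight x = 1 := by
  rw [← addRight_add, ZModModule.add_self, addRight_zero]

variable {K : Type*} [Field K]

noncomputable def hypercubeMatrix (α : Fin n → K) : Matrix (Fin n → ZMod 2) (Fin n → ZMod 2) K :=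
  ∑ i, α i • (Equiv.addRight (Pi.single i 1 : Fin n → ZMod 2)).permMatrix K

theorem hypercubeMatrix_apply (α : Fin n → K) (u v : Fin n → ZMod 2) :
    hypercubeMatrix α u v = ∑ i, if u + Pi.single i 1 = v then α i else 0 := by
  simp [hypercubeMatrix, Matrix.sum_apply, PEquiv.toMatrix_apply]

theorem hypercubeMatrix_apply_ne_zero_iff {α : Fin n → K} (hα : ∀ i, α i ≠ 0)
    {u v : Fin n → ZMod 2} : hypercubeMatrix α u v ≠ 0 ↔ (hypercube n).Adj u v := by
  rw [hypercubeMatrix_apply, hypercube_adj_iff]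
  constructor
  · intro h
    obtain ⟨i, -, hi⟩ := exists_ne_zero_of_sum_ne_zero h
    exact ⟨i, of_not_not fun h => hi (if_neg h)⟩
  · rintro ⟨i, rfl⟩
    rw [sum_eq_single i (fun j _ hj => if_neg fun h => hj ?_) (by simp), if_pos rfl]
    · exact hα i
    · simpa [Pi.single_apply, eq_comm] using congrFun (add_left_cancel h) i

theorem hypercubeMatrix_isSymm (α : Fin n → K) : (hypercubeMatrix α).IsSymm := by
  simp [Matrix.IsSymm, hypercubeMatrix, Matrix.transpose_sum, ZModModule.neg_eq_self]

theorem hypercubeMatrix_mul_self [CharP K 2] {α : Fin n → K} (hα : ∑ i, α i = 0) :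
    hypercubeMatrix α * hypercubeMatrix α = 0 := by
  have hcomm : ∀ x y : Fin n → ZMod 2,
      Commute ((Equiv.addRight x).permMatrix K) ((Equiv.addRight y).permMatrix K) := fun x y => by
    simp only [Commute, SemiconjBy, ← Matrix.permMatrix_mul, ← Equiv.addRight_add, add_comm]
  rw [← sq, hypercubeMatrix,
    sum_pow_char_of_commute 2 _ _ fun i j => ((hcomm _ _).smul_left _).smul_right _]
  simp_rw [smul_pow, sq ((Equiv.addRight _).permMatrix K), ← Matrix.permMatrix_mul,
    addRight_mul_self_of_zmodTwo, Matrix.permMatrix_one, ← sum_smul, ← sum_pow_char, hα]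
  simp

/-- Every forcing set of every perfect matching of `Q_n` has cardinality at least
`2^(n-2)`, for all `n ≥ 2`. -/
theorem forcing_number_hypercube (n : ℕ) (hn : 2 ≤ n)
    (M : (hypercube n).Subgraph) (hM : M.IsPerfectMatching)
    (S : Set (Sym2 (Fin n → ZMod 2))) (hS : S ⊆ M.edgeSet)
    (hforce : ∀ M' : (hypercube n).Subgraph,
      M'.IsPerfectMatching → S ⊆ M'.edgeSet → M' = M) :
    2 ^ (n - 2) ≤ S.ncard := by
  obtain ⟨α, hα, hαsum⟩ := exists_ne_zero_sum_eq_zero (K := GaloisField 2 2)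
    (by rw [GaloisField.card 2 2 two_ne_zero]; norm_num) hn
  have hcover := SimpleGraph.Subgraph.IsForcingSet.card_le_two_mul_ncard_add_rank
    (hypercubeMatrix_isSymm α) (fun _ _ => hypercubeMatrix_apply_ne_zero_iff hα) hM ⟨hS, hforce⟩
  have hrank := Matrix.two_mul_rank_le_card_of_mul_self_eq_zero (hypercubeMatrix_mul_self hαsum)
  have hcard : Fintype.card (Fin n → ZMod 2) = 4 * 2 ^ (n - 2) := by
    rw [Fintype.card_fun, ZMod.card, Fintype.card_fin, ← Nat.sub_add_cancel hn, pow_add]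
    simp [mul_comm]
  omega
end

section
/- Let G be a finite simple graph on 2m vertices and let k be a natural number such that every induced subgraph of G having a unique perfect matching has at most k vertices. Then every forcing set of every perfect matching of G has cardinality at least m − k/2; equivalently, the forcing number of every perfect matching of G is at least (2m − k)/2. -/
/-!
Let `A` be the set of vertices not covered by `S`. As `S ⊆ M` and `M` is a matching, `A` is a
union of `M`-edges, so `M` restricts to a perfect matching of `G[A]`. It is the only one: any
perfect matching of `G[A]`, completed by `M` outside `A`, is a perfect matching of `G` containing
`S`, hence equals `M`. Therefore `|A| ≤ k`, while the `2m - |A|` vertices covered by `S` number at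
most `2|S|`.
-/

lemma Sym2.ncard_setOf_exists_mem_le {α : Type*} {S : Set (Sym2 α)} (hS : S.Finite) :
    {v | ∃ e ∈ S, v ∈ e}.ncard ≤ 2 * S.ncard := by
  classical
  calc {v | ∃ e ∈ S, v ∈ e}.ncard = (hS.toFinset.biUnion Sym2.toFinset).card := by
        rw [← Set.ncard_coe_finset]; congr; ext; simp
    _ ≤ hS.toFinset.card * 2 := Finset.card_biUnion_le_card_mul _ _ _ fun e _ => by
        rw [Sym2.card_toFinset]; split_ifs <;> omega
    _ = 2 * S.ncard := by rw [Set.ncard_eq_toFinset_card S hS, mul_comm]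

namespace SimpleGraph.Subgraph

variable {V : Type*} {G : SimpleGraph V}

lemma IsMatching.mem_of_mem_edgeSet_of_adj {M : G.Subgraph} (hM : M.IsMatching) {e : Sym2 V}
    {v w : V} (he : e ∈ M.edgeSet) (hv : v ∈ e) (hvw : M.Adj v w) : w ∈ e := by
  have hother : M.Adj v (Sym2.Mem.other hv) := by
    rw [← Subgraph.mem_edgeSet, Sym2.other_spec hv]; exact he
  rw [← hM.eq_of_adj_left hother hvw]
  exact Sym2.other_mem hv

lemma IsPerfectMatching.eq_of_le {M N : G.Subgraph} (hN : N.IsPerfectMatching)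
    (hM : M.IsMatching) (h : N ≤ M) : N = M := by
  ext v w
  · simp [hN.2 v, h.1 (hN.2 v)]
  · refine ⟨fun hvw => h.2 hvw, fun hvw => ?_⟩
    obtain ⟨u, hvu, -⟩ := hN.1 (hN.2 v)
    rwa [hM.eq_of_adj_left hvw (h.2 hvu)]

variable {M : G.Subgraph} {A : Set V}

lemma IsPerfectMatching.comap_induce (hM : M.IsPerfectMatching)
    (hA : ∀ ⦃v w⦄, M.Adj v w → v ∈ A → w ∈ A) :
    (M.comap (Embedding.induce A).toHom).IsPerfectMatching := by
  refine isPerfectMatching_iff.mpr fun a => ?_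
  obtain ⟨w, hw, huniq⟩ := isPerfectMatching_iff.mp hM a
  exact ⟨⟨w, hA hw a.2⟩, ⟨M.adj_sub hw, hw⟩, fun b hb => Subtype.ext (huniq b hb.2)⟩

lemma IsPerfectMatching.isMatching_induce (hM : M.IsPerfectMatching)
    (hA : ∀ ⦃v w⦄, M.Adj v w → v ∈ A → w ∈ A) : (M.induce A).IsMatching := by
  intro v hv
  obtain ⟨w, hw, huniq⟩ := isPerfectMatching_iff.mp hM v
  exact ⟨w, ⟨hv, hA hw hv, hw⟩, fun u hu => huniq u hu.2.2⟩

lemma IsPerfectMatching.sup_induce_compl (hM : M.IsPerfectMatching)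
    (hA : ∀ ⦃v w⦄, M.Adj v w → v ∈ A → w ∈ A) {N : (G.induce A).Subgraph}
    (hN : N.IsPerfectMatching) :
    (N.map (Embedding.induce A).toHom ⊔ M.induce Aᶜ).IsPerfectMatching := by
  have hAc : ∀ ⦃v w⦄, M.Adj v w → v ∈ Aᶜ → w ∈ Aᶜ := fun v w hvw hv hw => hv (hA hvw.symm hw)
  refine ⟨(hN.1.map _ (Embedding.induce (G := G) A).injective).sup (hM.isMatching_induce hAc) ?_,
    fun v => ?_⟩
  · refine Set.disjoint_left.mpr fun v hv hv' => ?_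
    obtain ⟨a, -, rfl⟩ := support_subset_verts _ hv
    exact support_subset_verts _ hv' a.2
  · by_cases hv : v ∈ A
    · exact Or.inl ⟨⟨v, hv⟩, hN.2 _, rfl⟩
    · exact Or.inr hv

lemma IsPerfectMatching.existsUnique_isPerfectMatching_induce (hM : M.IsPerfectMatching)
    (hA : ∀ ⦃v w⦄, M.Adj v w → v ∈ A → w ∈ A)
    (hforce : ∀ M' : G.Subgraph, M'.IsPerfectMatching → M.induce Aᶜ ≤ M' → M' = M) :
    ∃! N : (G.induce A).Subgraph, N.IsPerfectMatching := by
  refine ⟨_, hM.comap_induce hA, fun N hN => hN.eq_of_le (hM.comap_induce hA).1 ?_⟩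
  have hpatch := hforce _ (hM.sup_induce_compl hA hN) le_sup_right
  exact (map_le_iff_le_comap _ _ _).mp (hpatch ▸ le_sup_left)

end SimpleGraph.Subgraph

/-- If `G` is a finite graph on `2m` vertices in which every induced subgraph with a
unique perfect matching has at most `k` vertices, then every forcing set of every
perfect matching of `G` has cardinality at least `m - k/2`. -/
theorem forcing_lower_bound_of_induced_bound {V : Type*} [Fintype V]
    (G : SimpleGraph V) (m k : ℕ) (hcard : Fintype.card V = 2 * m)
    (hk : ∀ A : Set V,
      (∃! N : (G.induce A).Subgraph, N.IsPerfectMatching) → A.ncard ≤ k)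
    (M : G.Subgraph) (hM : M.IsPerfectMatching)
    (S : Set (Sym2 V)) (hS : S ⊆ M.edgeSet)
    (hforce : ∀ M' : G.Subgraph, M'.IsPerfectMatching → S ⊆ M'.edgeSet → M' = M) :
    m - k / 2 ≤ S.ncard := by
  set A : Set V := {v | ∀ e ∈ S, v ∉ e}
  have hA : ∀ ⦃v w⦄, M.Adj v w → v ∈ A → w ∈ A := fun v w hvw hv e he hw =>
    hv e he (hM.1.mem_of_mem_edgeSet_of_adj (hS he) hw hvw.symm)
  have hSA : S ⊆ (M.induce Aᶜ).edgeSet := by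
    intro e he
    induction e using Sym2.ind with
    | _ v w => exact ⟨fun h => h _ he (Sym2.mem_mk_left v w),
        fun h => h _ he (Sym2.mem_mk_right v w), hS he⟩
  have hAk : A.ncard ≤ k := hk A <| hM.existsUnique_isPerfectMatching_induce hA
    fun M' hM' hle => hforce M' hM' (hSA.trans (SimpleGraph.Subgraph.edgeSet_mono hle))
  have hAc : Aᶜ.ncard ≤ 2 * S.ncard := by
    simpa [A, Set.compl_ofPred] using Sym2.ncard_setOf_exists_mem_le S.toFinite
  have hsplit := Set.ncard_add_ncard_compl A
  rw [Nat.card_eq_fintype_card, hcard] at hsplit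
  omega
end

section
/- Let F be a field, let G be a finite bipartite graph with parts X and Y of equal size, and let W be a matrix over F with rows indexed by X and columns indexed by Y such that W x y ≠ 0 if x is adjacent to y in G, and W x y = 0 otherwise. If G has a unique perfect matching, then W is nonsingular (det W ≠ 0). -/
/-- Let `G` be a finite bipartite graph with parts `X` and `Y` of equal size
(witnessed by an equivalence `e : X ≃ Y`), and let `W` be a weighted bipartite
adjacency matrix of `G` over a field `F` (nonzero exactly at adjacent pairs).
If `G` has a unique perfect matching (i.e. a unique bijection `σ : X ≃ Y` with
`x` adjacent to `σ x` for all `x`), then `W` is nonsingular. -/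
theorem unique_pm_weighted_adj_nonsingular {F : Type*} [Field F]
    {X Y : Type*} [Fintype X] [Fintype Y] [DecidableEq X]
    (Adj : X → Y → Prop) (e : X ≃ Y) (W : Matrix X Y F)
    (hW : ∀ x y, W x y ≠ 0 ↔ Adj x y)
    (huniq : ∃! σ : X ≃ Y, ∀ x, Adj x (σ x)) :
    (W.submatrix id e).det ≠ 0 := by
  obtain ⟨σ₀, hσ₀, huniq'⟩ := huniq
  set τ₀ : Equiv.Perm X := (σ₀.trans e.symm).symm with hτ₀def
  have key : ∀ τ : Equiv.Perm X, (∀ i, W (τ i) (e i) ≠ 0) ↔ τ = τ₀ := by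
    intro τ
    constructor
    · intro h
      have h2 : (τ.symm.trans e) = σ₀ := by
        apply huniq'
        intro x
        have := (hW _ _).mp (h (τ.symm x))
        simpa using this
      have : τ.symm = σ₀.trans e.symm := by
        ext i; simp [← h2]
      rw [hτ₀def, ← this, Equiv.symm_symm]
    · intro h
      subst h
      intro i
      apply (hW _ _).mpr
      have he : e i = σ₀ (τ₀ i) := by
        rw [hτ₀def, Equiv.symm_trans_apply, Equiv.symm_symm, Equiv.apply_symm_apply]
      rw [he]; exact hσ₀ (τ₀ i)
  rw [Matrix.det_apply']
  rw [Finset.sum_eq_single τ₀]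
  · apply mul_ne_zero
    · rcases Int.units_eq_one_or (Equiv.Perm.sign τ₀) with h | h <;> simp [h]
    · apply Finset.prod_ne_zero_iff.mpr
      intro i _
      simpa using (key _).mpr rfl i
  · intro τ _ hτ
    have : ¬ ∀ i, W (τ i) (e i) ≠ 0 := fun h => hτ ((key τ).mp h)
    push_neg at this
    obtain ⟨i, hi⟩ := this
    have : (∏ j, (W.submatrix id e) (τ j) j) = 0 :=
      Finset.prod_eq_zero (Finset.mem_univ i) (by simpa using hi)
    rw [this, mul_zero]
  · intro h
    exact absurd (Finset.mem_univ _) h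
end

section
/- Let F be a field, let G be a finite bipartite graph with parts X and Y, and let W be a matrix over F with rows indexed by X and columns indexed by Y such that W x y ≠ 0 if x is adjacent to y in G, and W x y = 0 otherwise. Then every induced subgraph of G that has a unique perfect matching contains at most 2 · rank(W) vertices. -/
lemma rank_submatrix_le_of_injective {F : Type*} [Field F]
    {X Y A B : Type*} [Fintype X] [Fintype Y] [Fintype A] [Fintype B]
    (W : Matrix X Y F) (f : A → X) (g : B → Y) (hg : Function.Injective g) :
    (W.submatrix f g).rank ≤ W.rank := by
  classical
  rw [Matrix.rank, Matrix.rank]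
  have hsub : LinearMap.range (W.submatrix f g).mulVecLin ≤
      Submodule.map (LinearMap.funLeft F F f) (LinearMap.range W.mulVecLin) := by
    rintro _ ⟨v, rfl⟩
    refine ⟨W.mulVec (Function.extend g v 0), ⟨_, rfl⟩, ?_⟩
    funext i
    show W.mulVec (Function.extend g v 0) (f i) = _
    simp only [Matrix.mulVecLin_apply, Matrix.mulVec, Matrix.submatrix_apply, dotProduct]
    calc ∑ y, W (f i) y * Function.extend g v 0 y
        = ∑ y ∈ Finset.univ.image g, W (f i) y * Function.extend g v 0 y := by
          refine (Finset.sum_subset (Finset.subset_univ _) ?_).symm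
          intro y _ hy
          have hny : ¬∃ j, g j = y := by simpa using hy
          rw [Function.extend_apply' _ _ _ hny]
          simp
      _ = ∑ j, W (f i) (g j) * Function.extend g v 0 (g j) :=
          Finset.sum_image (fun a _ b _ h => hg h)
      _ = ∑ j, W (f i) (g j) * v j := by
          simp [hg.extend_apply]
  calc Module.finrank F (LinearMap.range (W.submatrix f g).mulVecLin)
      ≤ Module.finrank F
          (Submodule.map (LinearMap.funLeft F F f) (LinearMap.range W.mulVecLin)) :=
        Submodule.finrank_mono hsub
    _ ≤ Module.finrank F (LinearMap.range W.mulVecLin) := Submodule.finrank_map_le _ _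

/-- Let `G` be a finite bipartite graph with parts `X` and `Y`, and let `W` be a
weighted bipartite adjacency matrix of `G` over a field `F` (nonzero exactly at
adjacent pairs). Then every induced subgraph of `G` (induced on `A ⊆ X` and `B ⊆ Y`)
that has a unique perfect matching has at most `2 * rank W` vertices. -/
theorem induced_unique_pm_le_twice_rank {F : Type*} [Field F]
    {X Y : Type*} [Fintype X] [Fintype Y]
    (Adj : X → Y → Prop) (W : Matrix X Y F)
    (hW : ∀ x y, W x y ≠ 0 ↔ Adj x y)
    (A : Set X) (B : Set Y)
    (huniq : ∃! σ : A ≃ B, ∀ a : A, Adj a (σ a : Y)) :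
    A.ncard + B.ncard ≤ 2 * W.rank := by
  classical
  obtain ⟨σ, hσ, huni⟩ := huniq
  haveI : Fintype A := Fintype.ofFinite A
  haveI : Fintype B := Fintype.ofFinite B
  set M : Matrix A A F := W.submatrix Subtype.val (fun a => (σ a : Y)) with hM
  have hdet : M.det ≠ 0 := by
    rw [Matrix.det_apply]
    rw [Finset.sum_eq_single (1 : Equiv.Perm A)]
    · simp only [Equiv.Perm.sign_one, one_smul, Equiv.Perm.one_apply]
      refine Finset.prod_ne_zero_iff.mpr fun i _ => ?_
      exact (hW _ _).mpr (hσ i)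
    · intro π _ hπ
      have hp : ∏ i, M (π i) i = 0 := by
        by_contra hp
        have hfac : ∀ i : A, M (π i) i ≠ 0 :=
          fun i => Finset.prod_ne_zero_iff.mp hp i (Finset.mem_univ i)
        have hadj : ∀ i : A, Adj ((π i : A) : X) (σ i : Y) :=
          fun i => (hW _ _).mp (hfac i)
        let τ : A ≃ B := π.symm.trans σ
        have hτ : ∀ a : A, Adj a (τ a : Y) := by
          intro a
          have := hadj (π.symm a)
          rwa [Equiv.apply_symm_apply] at this
        have hts : τ = σ := huni τ hτ
        apply hπ
        ext a
        have h1 : τ (π a) = σ (π a) := by rw [hts]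
        have h2 : σ a = σ (π a) := by
          simpa [τ, Equiv.symm_apply_apply] using h1
        have := σ.injective h2.symm
        simp [this]
      rw [hp, smul_zero]
    · intro h
      exact absurd (Finset.mem_univ _) h
  have hrankM : M.rank = Fintype.card A :=
    Matrix.rank_of_isUnit M ((Matrix.isUnit_iff_isUnit_det M).mpr hdet.isUnit)
  have hle : M.rank ≤ W.rank :=
    rank_submatrix_le_of_injective W Subtype.val (fun a => (σ a : Y))
      (Subtype.val_injective.comp σ.injective)
  have hcardA : A.ncard = Fintype.card A := by
    rw [← Nat.card_coe_set_eq, Nat.card_eq_fintype_card]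
  have hcardB : B.ncard = Fintype.card B := by
    rw [← Nat.card_coe_set_eq, Nat.card_eq_fintype_card]
  have hAB : Fintype.card A = Fintype.card B := Fintype.card_congr σ
  omega
end

section
/- For every integer n ≥ 1, there exists a square matrix A over the field ZMod 3, with rows indexed by the even-weight vertices of the n-dimensional hypercube Q_n and columns indexed by the odd-weight vertices of Q_n (each index set having size 2^(n-1)), such that: (1) A is invertible; (2) for every even-weight vertex x and odd-weight vertex y, A x y ≠ 0 if and only if x and y are adjacent in Q_n; and (3) for every odd-weight vertex y and even-weight vertex x, A⁻¹ y x ≠ 0 if and only if y and x are adjacent in Q_n. -/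
/-- The even-weight vertices of the hypercube `Q_n`. -/
def evenV (n : ℕ) : Type := {x : Fin n → ZMod 2 // ∑ i, x i = 0}

/-- The odd-weight vertices of the hypercube `Q_n`. -/
def oddV (n : ℕ) : Type := {x : Fin n → ZMod 2 // ∑ i, x i ≠ 0}

instance (n : ℕ) : Fintype (evenV n) := by unfold evenV; infer_instance
instance (n : ℕ) : Fintype (oddV n) := by unfold oddV; infer_instance
instance (n : ℕ) : DecidableEq (evenV n) := by unfold evenV; infer_instance
instance (n : ℕ) : DecidableEq (oddV n) := by unfold oddV; infer_instance

/-!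
Induction on `n`, splitting off the first coordinate: the even vertices of `Q_(n+1)` are the even
vertices of `Q_n` prefixed by `0` together with the odd ones prefixed by `1`, and symmetrically for
the odd vertices. In these coordinates, if `A` and `B` are mutually inverse matrices supported
exactly on the edges of `Q_n`, then so are `A' = [[A, 1], [1, -B]]` and `B' = ½ [[B, 1], [1, -A]]`
for `Q_(n+1)`, because `[[A, 1], [1, -B]] * [[B, 1], [1, -A]] = [[AB + 1, 0], [0, BA + 1]] = 2`.
-/

open Matrix

theorem zmod2_ne_zero_iff_eq_one (a : ZMod 2) : a ≠ 0 ↔ a = 1 := by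
  revert a; decide

theorem hypercube_adj_cons_cons_self {n : ℕ} (a : ZMod 2) (x y : Fin n → ZMod 2) :
    (hypercube (n + 1)).Adj (Fin.cons a x) (Fin.cons a y) ↔ (hypercube n).Adj x y := by
  simp [hypercube, ExistsUnique, Fin.exists_fin_succ, Fin.forall_fin_succ]

theorem hypercube_adj_cons_cons_of_ne {n : ℕ} {a b : ZMod 2} (hab : a ≠ b) (x y : Fin n → ZMod 2) :
    (hypercube (n + 1)).Adj (Fin.cons a x) (Fin.cons b y) ↔ x = y := by
  simp [hypercube, ExistsUnique, Fin.exists_fin_succ, Fin.forall_fin_succ, hab, funext_iff,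
    (Fin.succ_ne_zero _).symm]

def consParityEquiv (n : ℕ) (P : ZMod 2 → Prop) :
    {x : Fin n → ZMod 2 // P (∑ i, x i)} ⊕ {x : Fin n → ZMod 2 // P (1 + ∑ i, x i)} ≃
      {x : Fin (n + 1) → ZMod 2 // P (∑ i, x i)} where
  toFun := Sum.elim (fun u => ⟨Fin.cons 0 u.1, by simpa [Fin.sum_cons] using u.2⟩)
    (fun u => ⟨Fin.cons 1 u.1, by simpa [Fin.sum_cons] using u.2⟩)
  invFun x :=
    if h : x.1 0 = 0 then .inl ⟨Fin.tail x.1, by simpa [Fin.sum_univ_succ, Fin.tail, h] using x.2⟩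
    else .inr ⟨Fin.tail x.1, by
      simpa [Fin.sum_univ_succ, Fin.tail, (zmod2_ne_zero_iff_eq_one _).1 h] using x.2⟩
  left_inv := by
    rintro (u | u) <;> simp
  right_inv x := by
    ext1
    conv_rhs => rw [← Fin.cons_self_tail x.1]
    by_cases h : x.1 0 = 0
    · simp [h]
    · simp [(zmod2_ne_zero_iff_eq_one _).1 h]

def evenSuccEquiv (n : ℕ) : evenV n ⊕ oddV n ≃ evenV (n + 1) :=
  (Equiv.sumCongr (Equiv.refl _) (Equiv.subtypeEquivRight fun x => by
    generalize ∑ i, x i = s; revert s; decide)).trans (consParityEquiv n (· = 0))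

def oddSuccEquiv (n : ℕ) : oddV n ⊕ evenV n ≃ oddV (n + 1) :=
  (Equiv.sumCongr (Equiv.refl _) (Equiv.subtypeEquivRight fun x => by
    generalize ∑ i, x i = s; revert s; decide)).trans (consParityEquiv n (· ≠ 0))

def consLabel {n : ℕ} {m p : Type*} (f : m → Fin n → ZMod 2) (g : p → Fin n → ZMod 2) :
    m ⊕ p → Fin (n + 1) → ZMod 2 :=
  Sum.elim (fun i => Fin.cons 0 (f i)) (fun j => Fin.cons 1 (g j))

theorem consLabel_evenSuccEquiv_symm {n : ℕ} (x : evenV (n + 1)) :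
    consLabel Subtype.val Subtype.val ((evenSuccEquiv n).symm x) = x.val := by
  obtain ⟨u | v, rfl⟩ := (evenSuccEquiv n).surjective x <;> rfl

theorem consLabel_oddSuccEquiv_symm {n : ℕ} (y : oddV (n + 1)) :
    consLabel Subtype.val Subtype.val ((oddSuccEquiv n).symm y) = y.val := by
  obtain ⟨u | v, rfl⟩ := (oddSuccEquiv n).surjective y <;> rfl

theorem card_evenV_add_card_oddV (n : ℕ) :
    Fintype.card (evenV n) + Fintype.card (oddV n) = 2 ^ n := by
  rw [← Fintype.card_sum, Fintype.card_congr (α := evenV n ⊕ oddV n) (Equiv.sumCompl _)]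
  simp

theorem card_evenV_succ_eq_card_oddV_succ (n : ℕ) :
    Fintype.card (evenV (n + 1)) = Fintype.card (oddV (n + 1)) := by
  rw [← Fintype.card_congr (evenSuccEquiv n), ← Fintype.card_congr (oddSuccEquiv n),
    Fintype.card_sum, Fintype.card_sum, add_comm]

theorem card_evenV_succ (n : ℕ) : Fintype.card (evenV (n + 1)) = 2 ^ n := by
  have := card_evenV_add_card_oddV (n + 1)
  rw [← card_evenV_succ_eq_card_oddV_succ, pow_succ] at this
  omega

theorem card_oddV_succ (n : ℕ) : Fintype.card (oddV (n + 1)) = 2 ^ n := by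
  rw [← card_evenV_succ_eq_card_oddV_succ, card_evenV_succ]

section Doubling

variable {R : Type*} [Ring R] {m p : Type*} [Fintype m] [Fintype p] [DecidableEq m]
  [DecidableEq p]

def doubleBlocks (A : Matrix m p R) (B : Matrix p m R) : Matrix (m ⊕ p) (p ⊕ m) R :=
  fromBlocks A 1 1 (-B)

theorem doubleBlocks_mul_doubleBlocks {A : Matrix m p R} {B : Matrix p m R} (hAB : A * B = 1)
    (hBA : B * A = 1) : doubleBlocks A B * doubleBlocks B A = (2 : R) • 1 := by
  rw [doubleBlocks, doubleBlocks, fromBlocks_multiply, ← fromBlocks_one, fromBlocks_smul]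
  simp [hAB, hBA, two_smul]

end Doubling

section Weighting

variable {R : Type*} [Ring R] {n : ℕ} {l m o p : Type*}

def IsHypercubeWeighting (f : m → Fin n → ZMod 2) (g : p → Fin n → ZMod 2) (A : Matrix m p R) :
    Prop :=
  ∀ i j, A i j ≠ 0 ↔ (hypercube n).Adj (f i) (g j)

namespace IsHypercubeWeighting

variable {f : m → Fin n → ZMod 2} {g : p → Fin n → ZMod 2} {A : Matrix m p R}

theorem submatrix (hA : IsHypercubeWeighting f g A) {e₁ : l → m} {e₂ : o → p}
    {f' : l → Fin n → ZMod 2} {g' : o → Fin n → ZMod 2} (hf : ∀ i, f (e₁ i) = f' i)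
    (hg : ∀ j, g (e₂ j) = g' j) : IsHypercubeWeighting f' g' (A.submatrix e₁ e₂) :=
  fun i j => hf i ▸ hg j ▸ hA (e₁ i) (e₂ j)

theorem smul (hA : IsHypercubeWeighting f g A) {c : R} (hc : IsUnit c) :
    IsHypercubeWeighting f g (c • A) :=
  fun i j => by rw [Matrix.smul_apply, smul_eq_mul, ne_eq, hc.mul_right_eq_zero, ← ne_eq, hA]

theorem doubleBlocks [Nontrivial R] [DecidableEq m] [DecidableEq p]
    (hA : IsHypercubeWeighting f g A) {B : Matrix p m R} (hB : IsHypercubeWeighting g f B) (hf : f.Injective) (hg : g.Injective) :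
    IsHypercubeWeighting (consLabel f g) (consLabel g f) (doubleBlocks A B) := by
  rintro (i | i) (j | j)
  · simpa [_root_.doubleBlocks, consLabel, hypercube_adj_cons_cons_self] using hA i j
  · simp [_root_.doubleBlocks, consLabel, hypercube_adj_cons_cons_of_ne, one_apply, hf.eq_iff]
  · simp [_root_.doubleBlocks, consLabel, hypercube_adj_cons_cons_of_ne, one_apply, hg.eq_iff]
  · simpa [_root_.doubleBlocks, consLabel, hypercube_adj_cons_cons_self] using hB i j

end IsHypercubeWeighting

end Weighting

theorem hypercube_one_adj (x : evenV 1) (y : oddV 1) : (hypercube 1).Adj x.val y.val := by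
  refine ⟨0, fun h => y.2 ?_, fun i _ => Subsingleton.elim i 0⟩
  simpa [h] using x.2

def HasInverseHypercubeWeightings (R : Type*) [Ring R] (n : ℕ) : Prop :=
  ∃ (A : Matrix (evenV n) (oddV n) R) (B : Matrix (oddV n) (evenV n) R),
    A * B = 1 ∧ B * A = 1 ∧ IsHypercubeWeighting Subtype.val Subtype.val A ∧
      IsHypercubeWeighting Subtype.val Subtype.val B

section HasInverseHypercubeWeightings

variable (R : Type*) [CommRing R] [Nontrivial R]

theorem hasInverseHypercubeWeightings_one : HasInverseHypercubeWeightings R 1 := by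
  have : Subsingleton (evenV 1) := Fintype.card_le_one_iff_subsingleton.1 (card_evenV_succ 0).le
  have : Subsingleton (oddV 1) := Fintype.card_le_one_iff_subsingleton.1 (card_oddV_succ 0).le
  refine ⟨of fun _ _ => 1, of fun _ _ => 1, ?_, ?_, fun x y => ?_, fun y x => ?_⟩
  · ext i j
    rw [Subsingleton.elim i j]
    simp [mul_apply, card_oddV_succ 0]
  · ext i j
    rw [Subsingleton.elim i j]
    simp [mul_apply, card_evenV_succ 0]
  · exact iff_of_true one_ne_zero (hypercube_one_adj x y)
  · exact iff_of_true one_ne_zero (hypercube_one_adj x y).symm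

theorem HasInverseHypercubeWeightings.succ [Invertible (2 : R)] {n : ℕ}
    (h : HasInverseHypercubeWeightings R n) : HasInverseHypercubeWeightings R (n + 1) := by
  obtain ⟨A, B, hAB, hBA, hA, hB⟩ := h
  refine ⟨(doubleBlocks A B).submatrix (evenSuccEquiv n).symm (oddSuccEquiv n).symm,
    ((⅟2 : R) • doubleBlocks B A).submatrix (oddSuccEquiv n).symm (evenSuccEquiv n).symm,
    ?_, ?_, ?_, ?_⟩
  · rw [submatrix_mul_equiv, Matrix.mul_smul, doubleBlocks_mul_doubleBlocks hAB hBA, smul_smul,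
      invOf_mul_self, one_smul, submatrix_one_equiv]
  · rw [submatrix_mul_equiv, Matrix.smul_mul, doubleBlocks_mul_doubleBlocks hBA hAB, smul_smul,
      invOf_mul_self, one_smul, submatrix_one_equiv]
  · exact (hA.doubleBlocks hB Subtype.val_injective Subtype.val_injective).submatrix
      consLabel_evenSuccEquiv_symm consLabel_oddSuccEquiv_symm
  · exact ((hB.doubleBlocks hA Subtype.val_injective Subtype.val_injective).smul
      (isUnit_of_invertible _)).submatrix consLabel_oddSuccEquiv_symm consLabel_evenSuccEquiv_symm

theorem hasInverseHypercubeWeightings [Invertible (2 : R)] {n : ℕ} (hn : 1 ≤ n) :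
    HasInverseHypercubeWeightings R n := by
  induction n, hn using Nat.le_induction with
  | base => exact hasInverseHypercubeWeightings_one R
  | succ n _ ih => exact ih.succ R

end HasInverseHypercubeWeightings

/-- For every `n ≥ 1` there is an invertible matrix `A` over `ZMod 3`, with rows
indexed by the even-weight vertices of `Q_n` and columns by the odd-weight vertices
(each index set of size `2^(n-1)`), such that both `A` and its inverse `B` are
nonzero exactly at the adjacent pairs of `Q_n`. -/
theorem exists_invertible_weighted_adjacency (n : ℕ) (hn : 1 ≤ n) :
    ∃ (A : Matrix (evenV n) (oddV n) (ZMod 3))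
      (B : Matrix (oddV n) (evenV n) (ZMod 3)),
      A * B = 1 ∧ B * A = 1 ∧
      (∀ (x : evenV n) (y : oddV n), A x y ≠ 0 ↔ (hypercube n).Adj x.val y.val) ∧
      (∀ (y : oddV n) (x : evenV n), B y x ≠ 0 ↔ (hypercube n).Adj y.val x.val) ∧
      Fintype.card (evenV n) = 2 ^ (n - 1) ∧
      Fintype.card (oddV n) = 2 ^ (n - 1) := by
  let : Invertible (2 : ZMod 3) := invertibleOfNonzero (by decide)
  obtain ⟨A, B, hAB, hBA, hA, hB⟩ := hasInverseHypercubeWeightings (ZMod 3) hn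
  obtain ⟨k, rfl⟩ := Nat.exists_eq_add_of_le' hn
  exact ⟨A, B, hAB, hBA, hA, hB, by simpa using card_evenV_succ k, by simpa using card_oddV_succ k⟩
end

section
/- For every even integer n ≥ 2, the bipartite adjacency matrix of the n-dimensional hypercube Q_n over the field ZMod 2 — that is, the matrix with rows indexed by the even-weight vertices of Q_n, columns indexed by the odd-weight vertices of Q_n, and entry 1 when the two vertices are adjacent and 0 otherwise — has rank exactly 2^(n-2) over ZMod 2. -/
open scoped Classical in
/-- The bipartite adjacency matrix of `Q_n` over `ZMod 2`: rows indexed by even-weight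
vertices, columns by odd-weight vertices, entry `1` at adjacent pairs, `0` otherwise. -/
noncomputable def bipAdjMatrix (n : ℕ) : Matrix (evenV n) (oddV n) (ZMod 2) :=
  fun x y => if (hypercube n).Adj x.val y.val then 1 else 0

/-!
Let `A` be the adjacency operator of `Q_n` on functions `𝔽₂ⁿ → 𝔽₂`, `(A f)(x) = ∑ᵢ f (x + eᵢ)`.
In `A² f (x) = ∑ᵢ ∑ⱼ f (x + eᵢ + eⱼ)` the off-diagonal terms cancel in pairs and the diagonal
contributes `n f(x)`, so `A² = 0` for even `n`. Moreover `H f (x) = [x i₀ = 0] f (x + eᵢ₀)` is a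
contracting homotopy, `A H + H A = 1`, so `ker A = range A`. Since `A` exchanges even- and odd-weight
vertices with blocks `B` and `Bᵀ`, this gives `B Bᵀ = 0` and `ker B = range Bᵀ`, and rank–nullity
yields `2 rank B = 2^(n-1)`.
-/

open Finset Matrix

theorem CharTwo.sum_sum_eq_sum_diag_of_symm {ι R : Type*} [Fintype ι] [DecidableEq ι]
    [Semiring R] [CharP R 2] (g : ι → ι → R) (hg : ∀ i j, g i j = g j i) :
    ∑ i, ∑ j, g i j = ∑ i, g i i := by
  rw [← sum_product', ← diag_union_offDiag, sum_union (disjoint_diag_offDiag _), sum_diag]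
  have hoff : ∑ p ∈ (univ : Finset ι).offDiag, g p.1 p.2 = 0 := by
    refine sum_involution (fun p _ => p.swap) (fun p _ => ?_) (fun p hp _ => ?_)
      (fun p hp => by simpa [and_comm, eq_comm] using hp) (fun p _ => p.swap_swap)
    · rw [Prod.fst_swap, Prod.snd_swap, hg p.2, CharTwo.add_self_eq_zero]
    · exact fun h => (mem_offDiag.mp hp).2.2 (congrArg Prod.snd h)
  rw [hoff, add_zero]

theorem Matrix.two_mul_rank_eq_card_of_mul_transpose_eq_zero {m k K : Type*} [Fintype m]
    [Fintype k] [Field K] {A : Matrix m k K} (hA : A * Aᵀ = 0)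
    (hker : LinearMap.ker A.mulVecLin ≤ LinearMap.range Aᵀ.mulVecLin) :
    2 * A.rank = Fintype.card k := by
  have hrange : LinearMap.range Aᵀ.mulVecLin ≤ LinearMap.ker A.mulVecLin := by
    rintro _ ⟨w, rfl⟩
    rw [LinearMap.mem_ker, mulVecLin_apply, mulVecLin_apply, mulVec_mulVec, hA, zero_mulVec]
  have hrank := LinearMap.finrank_range_add_finrank_ker A.mulVecLin
  rw [le_antisymm hker hrange, Module.finrank_fintype_fun_eq_card] at hrank
  change A.rank + Aᵀ.rank = _ at hrank
  rw [rank_transpose] at hrank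
  omega

noncomputable def Subtype.extendByZero {α R : Type*} [Zero R] {P : α → Prop}
    (v : {x // P x} → R) : α → R :=
  Function.extend Subtype.val v 0

lemma Subtype.extendByZero_val {α R : Type*} [Zero R] {P : α → Prop} (v : {x // P x} → R)
    (x : {x // P x}) : Subtype.extendByZero v x = v x :=
  Subtype.val_injective.extend_apply v 0 x

lemma Subtype.extendByZero_of_not {α R : Type*} [Zero R] {P : α → Prop} (v : {x // P x} → R)
    {x : α} (hx : ¬P x) : Subtype.extendByZero v x = 0 :=
  Function.extend_apply' _ _ _ fun ⟨y, hy⟩ => hx (hy ▸ y.prop)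

namespace Hypercube

variable {n : ℕ}

lemma adj_iff_exists_eq_add_single {x y : Fin n → ZMod 2} :
    (hypercube n).Adj x y ↔ ∃ i, y = x + Pi.single i 1 := by
  have hne : ∀ a b : ZMod 2, a ≠ b ↔ b = a + 1 := by decide
  constructor
  · rintro ⟨i, hi, huniq⟩
    refine ⟨i, funext fun j => ?_⟩
    rcases eq_or_ne j i with rfl | hji
    · simpa using (hne _ _).mp hi
    · simpa [hji] using (not_not.mp (mt (huniq j) hji)).symm
  · rintro ⟨i, rfl⟩
    refine ⟨i, by simp [hne], fun j hj => ?_⟩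
    by_contra hji
    simp [hji] at hj

lemma sum_add_single_one (x : Fin n → ZMod 2) (i : Fin n) :
    ∑ j, (x + Pi.single i 1 : Fin n → ZMod 2) j = ∑ j, x j + 1 := by
  simp [sum_add_distrib]

lemma sum_add_single_one_ne_zero {x : Fin n → ZMod 2} (hx : ∑ j, x j = 0) (i : Fin n) :
    ∑ j, (x + Pi.single i 1 : Fin n → ZMod 2) j ≠ 0 := by
  rw [sum_add_single_one, hx, zero_add]
  exact one_ne_zero

lemma sum_add_single_one_eq_zero {x : Fin n → ZMod 2} (hx : ∑ j, x j ≠ 0) (i : Fin n) :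
    ∑ j, (x + Pi.single i 1 : Fin n → ZMod 2) j = 0 := by
  have h : ∀ a : ZMod 2, a ≠ 0 → a + 1 = 0 := by decide
  rw [sum_add_single_one, h _ hx]

lemma add_single_one_add_single_one (x : Fin n → ZMod 2) (i : Fin n) :
    x + Pi.single i 1 + Pi.single i 1 = x := by
  rw [add_assoc, ← Pi.single_add, CharTwo.add_self_eq_zero, Pi.single_zero, add_zero]

def evenVEquivOddV (i₀ : Fin n) : evenV n ≃ oddV n where
  toFun e := ⟨e.val + Pi.single i₀ 1, sum_add_single_one_ne_zero e.prop i₀⟩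
  invFun o := ⟨o.val + Pi.single i₀ 1, sum_add_single_one_eq_zero o.prop i₀⟩
  left_inv e := Subtype.ext (add_single_one_add_single_one e.val i₀)
  right_inv o := Subtype.ext (add_single_one_add_single_one o.val i₀)

lemma two_mul_card_oddV (hn : 0 < n) : 2 * Fintype.card (oddV n) = 2 ^ n := by
  have hsum : Fintype.card (evenV n) + Fintype.card (oddV n) = 2 ^ n := by
    rw [← Fintype.card_sum, Fintype.card_congr (α := evenV n ⊕ oddV n)
        (Equiv.sumCompl fun x : Fin n → ZMod 2 => ∑ i, x i = 0)]
    simp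
  rw [← hsum, Fintype.card_congr (evenVEquivOddV ⟨0, hn⟩)]
  ring

section Operators

variable {R : Type*}

def nbrSum [AddCommMonoid R] (f : (Fin n → ZMod 2) → R) (x : Fin n → ZMod 2) : R :=
  ∑ i, f (x + Pi.single i 1)

def homotopyAt [Zero R] (i₀ : Fin n) (f : (Fin n → ZMod 2) → R) (x : Fin n → ZMod 2) : R :=
  if x i₀ = 0 then f (x + Pi.single i₀ 1) else 0

lemma homotopyAt_zero [Zero R] (i₀ : Fin n) : homotopyAt i₀ (0 : (Fin n → ZMod 2) → R) = 0 := by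
  funext x
  simp [homotopyAt]

variable [Semiring R] [CharP R 2]

theorem nbrSum_nbrSum (heven : Even n) (f : (Fin n → ZMod 2) → R) : nbrSum (nbrSum f) = 0 := by
  funext x
  have hdiag : ∑ i : Fin n, f (x + Pi.single i 1 + Pi.single i 1) = 0 := by
    simp only [add_single_one_add_single_one, sum_const, card_univ, Fintype.card_fin,
      nsmul_eq_mul, CharTwo.natCast_eq_ite, if_pos heven, zero_mul]
  rw [Pi.zero_apply, ← hdiag]
  exact CharTwo.sum_sum_eq_sum_diag_of_symm _ fun i j => by rw [add_right_comm]

theorem nbrSum_homotopyAt_add_homotopyAt_nbrSum (i₀ : Fin n) (f : (Fin n → ZMod 2) → R) :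
    nbrSum (homotopyAt i₀ f) + homotopyAt i₀ (nbrSum f) = f := by
  funext x
  have hterm : ∀ i, homotopyAt i₀ f (x + Pi.single i 1)
      + (if x i₀ = 0 then f (x + Pi.single i₀ 1 + Pi.single i 1) else 0)
      = if i = i₀ then f x else 0 := by
    intro i
    rcases eq_or_ne i i₀ with rfl | hi
    · have hflip : ∀ a : ZMod 2, (a + 1 = 0 ↔ a ≠ 0) := by decide
      by_cases hx : x i = 0 <;>
        simp [homotopyAt, add_single_one_add_single_one, hflip, hx]
    · simp [homotopyAt, add_right_comm x (Pi.single i 1), CharTwo.add_self_eq_zero, hi]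
  calc (nbrSum (homotopyAt i₀ f) + homotopyAt i₀ (nbrSum f)) x
      = ∑ i, (homotopyAt i₀ f (x + Pi.single i 1)
          + if x i₀ = 0 then f (x + Pi.single i₀ 1 + Pi.single i 1) else 0) := by
        rw [Pi.add_apply, nbrSum, homotopyAt, nbrSum, ite_sum_zero, ← sum_add_distrib]
    _ = f x := by simp only [hterm, sum_ite_eq', mem_univ, if_true]

end Operators

open scoped Classical in
lemma sum_adj_mul_eq_nbrSum {R : Type*} [Semiring R] {P : (Fin n → ZMod 2) → Prop}
    [Fintype {y // P y}] {x : Fin n → ZMod 2} (hP : ∀ i, P (x + Pi.single i 1))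
    (f : (Fin n → ZMod 2) → R) :
    ∑ y : {y // P y}, (if (hypercube n).Adj x y then 1 else 0) * f y = nbrSum f x := by
  simp only [ite_mul, one_mul, zero_mul, ← sum_filter]
  symm
  refine sum_nbij (fun i => (⟨x + Pi.single i 1, hP i⟩ : {y // P y})) (fun i _ => ?_)
    (fun i _ j _ h => ?_) (fun y hy => ?_) (fun _ _ => rfl)
  · simpa using adj_iff_exists_eq_add_single.mpr ⟨i, rfl⟩
  · by_contra hij
    have := congrFun (congrArg Subtype.val h) i
    simp [Ne.symm hij] at this
  · obtain ⟨i, hi⟩ := adj_iff_exists_eq_add_single.mp (mem_filter.mp hy).2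
    exact ⟨i, mem_univ i, Subtype.ext hi.symm⟩

lemma bipAdjMatrix_mulVec_apply (v : oddV n → ZMod 2) (e : evenV n) :
    (bipAdjMatrix n *ᵥ v) e = nbrSum (Subtype.extendByZero v) e.val := by
  rw [← sum_adj_mul_eq_nbrSum (P := fun y => ∑ i, y i ≠ 0)
    (sum_add_single_one_ne_zero e.prop)]
  exact sum_congr rfl fun o _ =>
    congrArg₂ (· * ·) rfl (Subtype.extendByZero_val v o).symm

open scoped Classical in
lemma bipAdjMatrix_transpose_mulVec_apply (w : evenV n → ZMod 2) (o : oddV n) :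
    ((bipAdjMatrix n)ᵀ *ᵥ w) o = nbrSum (Subtype.extendByZero w) o.val := by
  rw [← sum_adj_mul_eq_nbrSum (P := fun y => ∑ i, y i = 0)
    (sum_add_single_one_eq_zero o.prop)]
  exact sum_congr rfl fun e _ =>
    congrArg₂ (· * ·) (if_congr ((hypercube n).adj_comm _ _) rfl rfl)
      (Subtype.extendByZero_val w e).symm

theorem bipAdjMatrix_mul_transpose (heven : Even n) :
    bipAdjMatrix n * (bipAdjMatrix n)ᵀ = 0 := by
  refine Matrix.ext_iff_mulVec.mpr fun w => funext fun e => ?_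
  rw [← mulVec_mulVec, zero_mulVec, bipAdjMatrix_mulVec_apply]
  refine (sum_congr rfl fun i _ => ?_).trans
    (congrFun (nbrSum_nbrSum heven (Subtype.extendByZero w)) e.val)
  exact (Subtype.extendByZero_val _ (⟨_, sum_add_single_one_ne_zero e.prop i⟩ : oddV n)).trans
    (bipAdjMatrix_transpose_mulVec_apply w _)

theorem ker_bipAdjMatrix_le_range_transpose (hn : 0 < n) :
    LinearMap.ker (bipAdjMatrix n).mulVecLin ≤ LinearMap.range (bipAdjMatrix n)ᵀ.mulVecLin := by
  intro v hv
  rw [LinearMap.mem_ker, mulVecLin_apply] at hv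
  set f := Subtype.extendByZero v
  have hf : nbrSum f = 0 := by
    funext x
    by_cases hx : ∑ i, x i = 0
    · exact (bipAdjMatrix_mulVec_apply v ⟨x, hx⟩).symm.trans (congrFun hv _)
    · exact sum_eq_zero fun i _ =>
        Subtype.extendByZero_of_not v (not_not.mpr (sum_add_single_one_eq_zero hx i))
  let i₀ : Fin n := ⟨0, hn⟩
  refine ⟨fun e => homotopyAt i₀ f e.val, funext fun o => ?_⟩
  have hhom := nbrSum_homotopyAt_add_homotopyAt_nbrSum i₀ f
  rw [hf, homotopyAt_zero, add_zero] at hhom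
  rw [mulVecLin_apply, bipAdjMatrix_transpose_mulVec_apply]
  calc nbrSum (Subtype.extendByZero fun e : evenV n => homotopyAt i₀ f e.val) o.val
      = nbrSum (homotopyAt i₀ f) o.val := sum_congr rfl fun i _ =>
        Subtype.extendByZero_val _ (⟨_, sum_add_single_one_eq_zero o.prop i⟩ : evenV n)
    _ = v o := by rw [hhom]; exact Subtype.extendByZero_val v o

end Hypercube

open Hypercube in
/-- For every even `n ≥ 2`, the bipartite adjacency matrix of `Q_n` over `ZMod 2`
has rank exactly `2^(n-2)`. -/
theorem bipAdjMatrix_rank_even (n : ℕ) (hn : 2 ≤ n) (heven : Even n) :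
    (bipAdjMatrix n).rank = 2 ^ (n - 2) := by
  have hrank := Matrix.two_mul_rank_eq_card_of_mul_transpose_eq_zero
    (bipAdjMatrix_mul_transpose heven) (ker_bipAdjMatrix_le_range_transpose (by omega))
  have hcard := two_mul_card_oddV (n := n) (by omega)
  obtain ⟨k, rfl⟩ : ∃ k, n = k + 2 := ⟨n - 2, by omega⟩
  rw [Nat.add_sub_cancel, pow_add] at *
  omega
end

section
/- For every odd integer n ≥ 1, the bipartite adjacency matrix A of the n-dimensional hypercube Q_n over the field ZMod 2 — that is, the matrix with rows indexed by the even-weight vertices of Q_n, columns indexed by the odd-weight vertices of Q_n, and entry 1 when the two vertices are adjacent and 0 otherwise — is nonsingular and is its own inverse: identifying the even-weight and odd-weight index sets via any fixed bijection making A a square matrix in the natural symmetric indexing, A · Aᵀ equals the identity matrix (equivalently, A is invertible with A⁻¹ = Aᵀ = A under the symmetric indexing). -/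
/-! Over a ring of characteristic two the adjacency matrix `M` of `Q_n` satisfies `M * M = n • 1`:
a diagonal entry counts the `n` neighbours of a vertex, and for `x ≠ x'` the reflection
`y ↦ x + x' - y` pairs off the common neighbours of `x` and `x'` without fixed points.
Every edge joins an even-weight to an odd-weight vertex, so `A * Aᵀ` and `Aᵀ * A` are the two
diagonal blocks of `M * M`. -/

namespace Matrix

variable {ι κ ν l m o α : Type*} [Fintype m] [Fintype κ] [NonUnitalNonAssocSemiring α]

theorem submatrix_mul_submatrix_of_support_subset_range (M : Matrix l m α) (N : Matrix m o α)
    (f : ι → l) {g : κ → m} (hg : Function.Injective g) (h : ν → o)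
    (hM : ∀ i, ∀ v ∉ Set.range g, M (f i) v = 0) :
    M.submatrix f g * N.submatrix g h = (M * N).submatrix f h := by
  ext i j
  exact Fintype.sum_of_injective g hg _ _ (fun v hv => by simp [hM i v hv]) fun _ => rfl

end Matrix

namespace hypercube

variable {n : ℕ}

theorem adj_iff {x y : Fin n → ZMod 2} :
    (hypercube n).Adj x y ↔ ∃ i, y = x + Pi.single i 1 := by
  constructor
  · rintro ⟨i, hi, huniq⟩
    refine ⟨i, funext fun j => ?_⟩
    obtain rfl | hji := eq_or_ne j i
    · have : ∀ a b : ZMod 2, a ≠ b → b = a + 1 := by decide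
      simpa using this _ _ hi
    · simpa [hji] using (not_imp_comm.1 (huniq j) hji).symm
  · rintro ⟨i, rfl⟩
    refine ⟨i, by simp, fun j hj => ?_⟩
    by_contra hji
    simp [hji] at hj

theorem adj_sub_sub_iff {c x y : Fin n → ZMod 2} :
    (hypercube n).Adj (c - x) (c - y) ↔ (hypercube n).Adj x y := by
  simp only [hypercube, Pi.sub_apply, ne_eq, sub_right_inj]

theorem sum_eq_add_one_of_adj {x y : Fin n → ZMod 2} (h : (hypercube n).Adj x y) :
    ∑ i, y i = ∑ i, x i + 1 := by
  obtain ⟨i, rfl⟩ := adj_iff.1 h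
  simp [Finset.sum_add_distrib]

theorem sum_eq_zero_iff_of_adj {x y : Fin n → ZMod 2} (h : (hypercube n).Adj x y) :
    ∑ i, y i = 0 ↔ ∑ i, x i ≠ 0 := by
  rw [sum_eq_add_one_of_adj h]
  generalize ∑ i, x i = a
  revert a
  decide

variable [DecidableRel (hypercube n).Adj]

theorem neighborFinset_eq (x : Fin n → ZMod 2) :
    (hypercube n).neighborFinset x = Finset.univ.image fun i => x + Pi.single i 1 := by
  ext y
  simp [adj_iff, eq_comm]

theorem degree_eq (x : Fin n → ZMod 2) : (hypercube n).degree x = n := by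
  rw [← SimpleGraph.card_neighborFinset_eq_degree, neighborFinset_eq,
    Finset.card_image_of_injective, Finset.card_univ, Fintype.card_fin]
  intro i j hij
  simpa [Pi.single_apply, eq_comm] using congrFun (add_left_cancel hij) i

theorem adjMatrix_mul_self {R : Type*} [Ring R] [CharP R 2] :
    (hypercube n).adjMatrix R * (hypercube n).adjMatrix R = (n : R) • (1 : Matrix _ _ R) := by
  ext x x'
  obtain rfl | hne := eq_or_ne x x'
  · rw [Matrix.smul_apply, Matrix.one_apply_eq, smul_eq_mul, mul_one,
      SimpleGraph.adjMatrix_mul_self_apply_self, degree_eq]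
  rw [Matrix.smul_apply, Matrix.one_apply_ne hne, smul_zero, Matrix.mul_apply]
  refine Finset.sum_ninvolution (fun y => x + x' - y) (fun y => ?_) (fun y _ hy => hne ?_)
    (fun _ => Finset.mem_univ _) (fun y => sub_sub_cancel _ y)
  · have h₁ := adj_sub_sub_iff (c := x + x') (x := x') (y := y)
    have h₂ := adj_sub_sub_iff (c := x + x') (x := y) (y := x)
    rw [add_sub_cancel_right] at h₁
    rw [add_sub_cancel_left] at h₂
    simp only [SimpleGraph.adjMatrix_apply, h₁, h₂, (hypercube n).adj_comm x' y,
      (hypercube n).adj_comm y x, ite_zero_mul_ite_zero, and_comm (a := (hypercube n).Adj y x')]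
    exact CharTwo.add_self_eq_zero _
  · funext i
    have : ∀ a b c : ZMod 2, a + b - c = c → a = b := by decide
    exact this _ _ _ (congrFun hy i)

end hypercube

open Matrix in
theorem bipAdjMatrix_self_inverse_odd_general (n : ℕ) (hodd : Odd n) :
    (bipAdjMatrix n) * (bipAdjMatrix n)ᵀ = 1 ∧
    (bipAdjMatrix n)ᵀ * (bipAdjMatrix n) = 1 := by
  classical
  set M := (hypercube n).adjMatrix (ZMod 2)
  have hMM : M * M = 1 := by
    rw [hypercube.adjMatrix_mul_self, hodd.natCast_zmod_two, one_smul]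
  have hblock {ι κ : Type} [Fintype κ] [DecidableEq ι] {f : ι → Fin n → ZMod 2}
      {g : κ → Fin n → ZMod 2} (hf : f.Injective) (hg : g.Injective)
      (hfg : ∀ i v, (hypercube n).Adj (f i) v → v ∈ Set.range g) :
      M.submatrix f g * M.submatrix g f = 1 := by
    refine (submatrix_mul_submatrix_of_support_subset_range M M f hg f fun i v hv => ?_).trans ?_
    · simpa [M] using mt (hfg i v) hv
    · rw [hMM, submatrix_one f hf]
  -- the named index types keep these blocks indexed by `evenV n`, `oddV n` rather than the
  -- unfolded subtypes, which `rw` would not accept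
  have hA : bipAdjMatrix n = M.submatrix (l := evenV n) (o := oddV n) Subtype.val Subtype.val :=
    rfl
  have hAt :
      (bipAdjMatrix n)ᵀ = M.submatrix (l := oddV n) (o := evenV n) Subtype.val Subtype.val := by
    ext x y
    exact if_congr ((hypercube n).adj_comm _ _) rfl rfl
  rw [hAt, hA]
  refine ⟨hblock Subtype.val_injective Subtype.val_injective fun x v hxv => ?_,
    hblock Subtype.val_injective Subtype.val_injective fun x v hxv => ?_⟩
  · exact ⟨⟨v, fun hv => (hypercube.sum_eq_zero_iff_of_adj hxv).1 hv x.2⟩, rfl⟩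
  · exact ⟨⟨v, (hypercube.sum_eq_zero_iff_of_adj hxv).2 x.2⟩, rfl⟩

open Matrix in
/-- For every odd `n ≥ 1`, the bipartite adjacency matrix `A` of `Q_n` over `ZMod 2`
is nonsingular with inverse its own transpose: `A * Aᵀ = 1` and `Aᵀ * A = 1`.
In particular, identifying the row and column index sets by any bijection making `A`
square (e.g. the natural symmetric lexicographic indexing, under which `A` is a
symmetric matrix), `A` is invertible and is its own inverse. -/
theorem bipAdjMatrix_self_inverse_odd (n : ℕ) (hn : 1 ≤ n) (hodd : Odd n) :
    (bipAdjMatrix n) * (bipAdjMatrix n)ᵀ = 1 ∧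
    (bipAdjMatrix n)ᵀ * (bipAdjMatrix n) = 1 :=
  bipAdjMatrix_self_inverse_odd_general n hodd
end
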